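/- (Bertsimas-Natarajan-Teo type bound) Let Z_1,...,Z_K be random variables with means μ_i and variances σ_i². For any real T, E[max_i Z_i] ≤ ∑_{i=1}^K (μ_i + √((μ_i − T)² + σ_i²))/2 + (2−K)T/2. -/

import Mathlib

open MeasureTheory Real Finset

lemma abs_int_le_sqrt
    {Ω : Type*} [MeasurableSpace Ω] (μ : Measure Ω) [IsProbabilityMeasure μ]
    (X : Ω → ℝ) (hX : Integrable X μ) (hX2 : Integrable (fun ω => X ω ^ 2) μ) :
    ∫ ω, |X ω| ∂μ ≤ Real.sqrt (∫ ω, X ω ^ 2 ∂μ) := by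
  set A := ∫ ω, |X ω| ∂μ with hA
  have hA0 : 0 ≤ A := integral_nonneg fun ω => abs_nonneg _
  have habs : Integrable (fun ω => |X ω|) μ := hX.abs
  have h1 : Integrable (fun ω => X ω ^ 2 - 2 * A * |X ω|) μ :=
    hX2.sub (habs.const_mul _)
  have expand : ∫ ω, (|X ω| - A) ^ 2 ∂μ = (∫ ω, X ω ^ 2 ∂μ) - A ^ 2 := by
    have : (fun ω => (|X ω| - A) ^ 2)
        = fun ω => (X ω ^ 2 - 2 * A * |X ω|) + A ^ 2 := by
      funext ω; have := sq_abs (X ω); nlinarith [sq_abs (X ω)]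
    rw [this, integral_add h1 (integrable_const _), integral_const,
      integral_sub hX2 (habs.const_mul _), integral_const_mul]
    simp [hA]
    ring
  have key : 0 ≤ (∫ ω, X ω ^ 2 ∂μ) - A ^ 2 := by
    rw [← expand]; exact integral_nonneg fun ω => sq_nonneg _
  exact Real.le_sqrt_of_sq_le (by linarith)

/-- Bertsimas–Natarajan–Teo type bound on the expectation of the maximum:
for random variables `Z i` with means `m i` and variances `v i`, and any real `T`,
`E[max_i Z i] ≤ ∑ i, (m i + √((m i − T)² + v i))/2 + (2 − K)·T/2`. -/
theorem expect_max_le_BNT_bound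
    {Ω : Type*} [MeasurableSpace Ω] (μ : Measure Ω) [IsProbabilityMeasure μ]
    (K : ℕ) (hK : 0 < K) (Z : Fin K → Ω → ℝ)
    (hint : ∀ i, Integrable (Z i) μ)
    (hsq : ∀ i, Integrable (fun ω => (Z i ω) ^ 2) μ)
    (m v : Fin K → ℝ)
    (hm : ∀ i, m i = ∫ ω, Z i ω ∂μ)
    (hv : ∀ i, v i = ∫ ω, (Z i ω - m i) ^ 2 ∂μ)
    (T : ℝ) :
    ∫ ω, (⨆ i, Z i ω) ∂μ
      ≤ ∑ i, (m i + Real.sqrt ((m i - T) ^ 2 + v i)) / 2 + (2 - (K : ℝ)) * T / 2 := by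
  haveI : Nonempty (Fin K) := Fin.pos_iff_nonempty.mp hK
  -- integrability pieces
  have hintT : ∀ i, Integrable (fun ω => Z i ω - T) μ :=
    fun i => (hint i).sub (integrable_const _)
  have hmax : ∀ i, Integrable (fun ω => max (Z i ω - T) 0) μ := by
    intro i
    have := ((hintT i).sup (integrable_const 0 : Integrable (fun _ : Ω => (0:ℝ)) μ))
    simpa [Pi.sup_def] using this
  have hsum : Integrable (fun ω => ∑ i, max (Z i ω - T) 0) μ :=
    integrable_finset_sum _ fun i _ => hmax i
  have hsupInt : Integrable (fun ω => ⨆ i, Z i ω) μ := by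
    have hsup' : Integrable (univ.sup' univ_nonempty Z) μ := by
      exact Finset.sup'_induction univ_nonempty Z (p := fun g => Integrable g μ)
        (fun a ha b hb => ha.sup hb) (fun i _ => hint i)
    have : (fun ω => ⨆ i, Z i ω) = univ.sup' univ_nonempty Z := by
      funext ω
      rw [← Finset.sup'_univ_eq_ciSup]
      simp [Finset.sup'_apply]
    rw [this]; exact hsup'
  -- pointwise bound
  have hpt : ∀ ω, (⨆ i, Z i ω) ≤ T + ∑ i, max (Z i ω - T) 0 := by
    intro ω
    refine ciSup_le fun i => ?_
    have h1 : Z i ω ≤ T + max (Z i ω - T) 0 := by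
      rcases le_total (Z i ω) T with h | h
      · simpa using h.trans (le_add_of_nonneg_right (le_max_right _ _))
      · simp [max_eq_left (sub_nonneg.mpr h)]
    refine h1.trans (add_le_add (le_refl T) ?_)
    exact Finset.single_le_sum (f := fun j => max (Z j ω - T) 0)
      (fun j _ => le_sup_right) (mem_univ i)
  have hmono : ∫ ω, (⨆ i, Z i ω) ∂μ ≤ ∫ ω, (T + ∑ i, max (Z i ω - T) 0) ∂μ :=
    integral_mono hsupInt ((integrable_const T).add hsum) hpt
  -- integral of RHS
  have hrhs : ∫ ω, (T + ∑ i, max (Z i ω - T) 0) ∂μ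
      = T + ∑ i, ∫ ω, max (Z i ω - T) 0 ∂μ := by
    rw [integral_add (integrable_const _) hsum, integral_const,
      integral_finset_sum _ fun i _ => hmax i]
    simp
  -- bound each term
  have hterm : ∀ i, ∫ ω, max (Z i ω - T) 0 ∂μ
      ≤ ((m i - T) + Real.sqrt ((m i - T) ^ 2 + v i)) / 2 := by
    intro i
    have habsint : Integrable (fun ω => |Z i ω - T|) μ := (hintT i).abs
    have heq : ∀ ω, max (Z i ω - T) 0 = ((Z i ω - T) + |Z i ω - T|) / 2 := by
      intro ω; rcases le_total (Z i ω - T) 0 with h | h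
      · rw [max_eq_right h, abs_of_nonpos h]; ring
      · rw [max_eq_left h, abs_of_nonneg h]; ring
    have hsqT : Integrable (fun ω => (Z i ω - T) ^ 2) μ := by
      have : (fun ω => (Z i ω - T) ^ 2)
          = fun ω => (Z i ω ^ 2 - (2 * T) * Z i ω) + T ^ 2 := by
        funext ω; ring
      rw [this]
      exact ((hsq i).sub ((hint i).const_mul _)).add (integrable_const _)
    have hsqval : ∫ ω, (Z i ω - T) ^ 2 ∂μ = (m i - T) ^ 2 + v i := by
      have hsqm : Integrable (fun ω => (Z i ω - m i) ^ 2) μ := by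
        have : (fun ω => (Z i ω - m i) ^ 2)
            = fun ω => (Z i ω ^ 2 - (2 * m i) * Z i ω) + m i ^ 2 := by
          funext ω; ring
        rw [this]
        exact ((hsq i).sub ((hint i).const_mul _)).add (integrable_const _)
      have hdecomp : (fun ω => (Z i ω - T) ^ 2)
          = fun ω => ((Z i ω - m i) ^ 2 + (2 * (m i - T)) * Z i ω)
              + ((m i - T) ^ 2 - 2 * (m i - T) * m i) := by
        funext ω; ring
      have hB : Integrable (fun ω => 2 * (m i - T) * Z i ω) μ := (hint i).const_mul _
      have hAB : Integrable
          (fun ω => (Z i ω - m i) ^ 2 + 2 * (m i - T) * Z i ω) μ := hsqm.add hB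
      rw [hdecomp, integral_add hAB (integrable_const _),
        integral_add hsqm hB, integral_const_mul, integral_const,
        ← hm i, ← hv i]
      simp
      ring
    calc ∫ ω, max (Z i ω - T) 0 ∂μ
        = ((∫ ω, (Z i ω - T) ∂μ) + ∫ ω, |Z i ω - T| ∂μ) / 2 := by
          simp only [heq]
          rw [integral_div, integral_add (hintT i) habsint]
      _ ≤ ((m i - T) + Real.sqrt ((m i - T) ^ 2 + v i)) / 2 := by
          have h1 : ∫ ω, (Z i ω - T) ∂μ = m i - T := by
            rw [integral_sub (hint i) (integrable_const _), integral_const, ← hm i]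
            simp
          have h2 : ∫ ω, |Z i ω - T| ∂μ ≤ Real.sqrt ((m i - T) ^ 2 + v i) := by
            have := abs_int_le_sqrt μ (fun ω => Z i ω - T) (hintT i) hsqT
            rwa [hsqval] at this
          linarith
  have hKcast : (1 : ℝ) ≤ K := by exact_mod_cast hK
  calc ∫ ω, (⨆ i, Z i ω) ∂μ
      ≤ T + ∑ i, ∫ ω, max (Z i ω - T) 0 ∂μ := by rw [← hrhs]; exact hmono
    _ ≤ T + ∑ i, ((m i - T) + Real.sqrt ((m i - T) ^ 2 + v i)) / 2 := by
        gcongr with i _; exact hterm i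
    _ = ∑ i, (m i + Real.sqrt ((m i - T) ^ 2 + v i)) / 2 + (2 - (K : ℝ)) * T / 2 := by
        have hsplit : ∀ i : Fin K, (m i + Real.sqrt ((m i - T) ^ 2 + v i)) / 2
            = (m i - T + Real.sqrt ((m i - T) ^ 2 + v i)) / 2 + T / 2 := fun i => by ring
        simp only [hsplit, Finset.sum_add_distrib, Finset.sum_const, card_univ,
          Fintype.card_fin, nsmul_eq_mul]
        ring
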